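/- Let v₀ ∈ [5.1, 7.5] and set t₁ = (10v₀ − 25)/13, t₂ = (10v₀ + 1)/13, t₃ = (10v₀ + 153)/22, t₄ = 157/11. Define v(t) = v₀ + V_in(t; t₁,t₂,t₃,t₄) − V_out(t) for t ∈ [0,20], where V_out is the nominal consumption function. Then (1/20)·∫₀²⁰ v(t) dt = (1300·v₀² + 20420·v₀ + 634817)/114400. -/

import Mathlib

/-- Volume of oil pumped in by time `t` with two activations during `[t₁,t₂] ∪ [t₃,t₄]`
at rate 2.2 l/s. -/
noncomputable def Vin (t t₁ t₂ t₃ t₄ : ℝ) : ℝ :=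
  2.2 * ((min t t₂ - min t t₁) + (min t t₄ - min t t₃))

/-- The nominal consumption function (continuous piecewise linear, `Vout 0 = 0`). -/
noncomputable def Vout (t : ℝ) : ℝ :=
  if t ≤ 2 then 0
  else if t ≤ 4 then 1.2 * (t - 2)
  else if t ≤ 8 then 2.4
  else if t ≤ 10 then 2.4 + 1.2 * (t - 8)
  else if t ≤ 12 then 4.8 + 2.5 * (t - 10)
  else if t ≤ 14 then 9.8
  else if t ≤ 16 then 9.8 + 1.7 * (t - 14)
  else if t ≤ 18 then 13.2 + 0.5 * (t - 16)
  else 14.2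

/-!
Pumping and consumption are both sums of ramps `min t b - min t a`, the volume moved by a
unit-rate flow on `[a, b]` up to time `t`. Over `[0, T]` such a ramp integrates to
`(b - a) * (T - (a + b) / 2)`: the volume `b - a`, delivered on average at the midpoint of
`[a, b]`, stays in the tank for the rest of the horizon. Summing these terms gives a quadratic
in `v₀`.
-/
open MeasureTheory (volume)
open intervalIntegral

def ramp (a b t : ℝ) : ℝ := min t b - min t a

@[fun_prop]
lemma continuous_ramp (a b : ℝ) : Continuous (ramp a b) := by
  unfold ramp; fun_prop

lemma integral_min_const {c T : ℝ} (hc : 0 ≤ c) (hcT : c ≤ T) :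
    ∫ t in (0:ℝ)..T, min t c = T * c - c ^ 2 / 2 := by
  have hint : ∀ a b : ℝ, IntervalIntegrable (fun t => min t c) volume a b :=
    fun a b => (continuous_id.min continuous_const).intervalIntegrable a b
  have below : ∫ t in (0:ℝ)..c, min t c = ∫ t in (0:ℝ)..c, t :=
    integral_congr fun t ht => min_eq_left (by rw [Set.uIcc_of_le hc] at ht; exact ht.2)
  have above : ∫ t in c..T, min t c = ∫ _ in c..T, c :=
    integral_congr fun t ht => min_eq_right (by rw [Set.uIcc_of_le hcT] at ht; exact ht.1)
  rw [← integral_add_adjacent_intervals (hint 0 c) (hint c T), below, above, integral_id,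
    intervalIntegral.integral_const, smul_eq_mul]
  ring

lemma integral_ramp {a b T : ℝ} (ha : a ∈ Set.Icc 0 T) (hb : b ∈ Set.Icc 0 T) :
    ∫ t in (0:ℝ)..T, ramp a b t = (b - a) * (T - (a + b) / 2) := by
  have hint (c : ℝ) : IntervalIntegrable (fun t => min t c) volume 0 T :=
    (continuous_id.min continuous_const).intervalIntegrable 0 T
  unfold ramp
  rw [integral_sub (hint b) (hint a), integral_min_const hb.1 hb.2,
    integral_min_const ha.1 ha.2]
  ring

lemma Vout_eq_ramp (t : ℝ) : Vout t = 1.2 * ramp 2 4 t + 1.2 * ramp 8 10 t + 2.5 * ramp 10 12 t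
    + 1.7 * ramp 14 16 t + 0.5 * ramp 16 18 t := by
  unfold Vout ramp
  split_ifs <;> simp (disch := grind) only [min_eq_left, min_eq_right] <;> norm_num

lemma Vin_eq_ramp (t t₁ t₂ t₃ t₄ : ℝ) :
    Vin t t₁ t₂ t₃ t₄ = 2.2 * (ramp t₁ t₂ t + ramp t₃ t₄ t) :=
  rfl

@[fun_prop]
lemma continuous_Vin (t₁ t₂ t₃ t₄ : ℝ) : Continuous fun t => Vin t t₁ t₂ t₃ t₄ := by
  simp_rw [Vin_eq_ramp]; fun_prop

@[fun_prop]
lemma continuous_Vout : Continuous Vout := by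
  simp_rw [funext Vout_eq_ramp]; fun_prop

lemma integral_Vin {t₁ t₂ t₃ t₄ T : ℝ} (h₁ : t₁ ∈ Set.Icc 0 T) (h₂ : t₂ ∈ Set.Icc 0 T)
    (h₃ : t₃ ∈ Set.Icc 0 T) (h₄ : t₄ ∈ Set.Icc 0 T) :
    ∫ t in (0:ℝ)..T, Vin t t₁ t₂ t₃ t₄ =
      2.2 * ((t₂ - t₁) * (T - (t₁ + t₂) / 2) + (t₄ - t₃) * (T - (t₃ + t₄) / 2)) := by
  simp_rw [Vin_eq_ramp]
  rw [integral_const_mul, integral_add, integral_ramp h₁ h₂, integral_ramp h₃ h₄]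
  all_goals exact (continuous_ramp _ _).intervalIntegrable _ _

lemma integral_Vout : ∫ t in (0:ℝ)..20, Vout t = 132.2 := by
  simp_rw [Vout_eq_ramp]
  rw [integral_add, integral_add, integral_add, integral_add,
    integral_const_mul, integral_const_mul, integral_const_mul, integral_const_mul,
    integral_const_mul, integral_ramp, integral_ramp, integral_ramp, integral_ramp, integral_ramp]
  all_goals first
    | exact Continuous.intervalIntegrable (by fun_prop) _ _
    | norm_num

theorem stmt_14 (v₀ : ℝ) (hv₀ : 5.1 ≤ v₀ ∧ v₀ ≤ 7.5) :
    (1 / 20) * ∫ t in (0:ℝ)..20,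
        (v₀ + Vin t ((10 * v₀ - 25) / 13) ((10 * v₀ + 1) / 13)
          ((10 * v₀ + 153) / 22) (157 / 11) - Vout t) =
      (1300 * v₀ ^ 2 + 20420 * v₀ + 634817) / 114400 := by
  obtain ⟨hlo, hhi⟩ := hv₀
  rw [integral_sub, integral_add, intervalIntegral.integral_const, smul_eq_mul, integral_Vout,
    integral_Vin]
  · ring
  all_goals first
    | exact Continuous.intervalIntegrable (by fun_prop) _ _
    | constructor <;> linarith
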